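/- For n ≥ 2, the map Ψ_n : ℝ_{>0} × ℝ × Q_{A_{n−1}} → Q_{A_n} defined by Ψ_n(α,β,x) = η, where η_{11} = α + β²·x_{22}, η_{12} = η_{21} = β·x_{22}, and η_{ij} = x_{ij} for all other tridiagonal entries (i,j) with 2 ≤ i,j ≤ n, is well defined (its values indeed lie in Q_{A_n}) and is a bijection. -/
import Mathlib


open Matrix

noncomputable section

/-- Tridiagonal symmetric real `n × n` matrices (the space `Z_G` for `G = A_n`). -/
def ZG (n : ℕ) : Set (Matrix (Fin n) (Fin n) ℝ) :=
  {y | y.IsSymm ∧ ∀ i j : Fin n, ((i : ℕ) + 1 < (j : ℕ) ∨ (j : ℕ) + 1 < (i : ℕ)) → y i j = 0}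

/-- The dual cone `Q_G`: tridiagonal symmetric matrices whose consecutive `2 × 2`
principal submatrices are positive definite. -/
def QG (n : ℕ) : Set (Matrix (Fin n) (Fin n) ℝ) :=
  {η | η ∈ ZG n ∧ (∀ i : Fin n, 0 < η i i) ∧
    ∀ i j : Fin n, (i : ℕ) + 1 = (j : ℕ) → 0 < η i i * η j j - (η i j) ^ 2}

/-- The map `Ψ : (α, β, x) ↦ η` of the recurrent construction of `Q_{A_{n+2}}` from
`Q_{A_{n+1}}` : `η₁₁ = α + β² x₂₂`, `η₁₂ = η₂₁ = β x₂₂`, and `η_{ij} = x_{ij}` otherwise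
(vertex `v` of the inner graph `{2, …, n+2}` is the index `v - 2` of `x`). -/
def Psi {n : ℕ} (α β : ℝ) (x : Matrix (Fin (n + 1)) (Fin (n + 1)) ℝ) :
    Matrix (Fin (n + 2)) (Fin (n + 2)) ℝ :=
  Matrix.of fun i j =>
    if (i : ℕ) = 0 ∧ (j : ℕ) = 0 then α + β ^ 2 * x 0 0
    else if ((i : ℕ) = 0 ∧ (j : ℕ) = 1) ∨ ((i : ℕ) = 1 ∧ (j : ℕ) = 0) then β * x 0 0
    else if (i : ℕ) = 0 ∨ (j : ℕ) = 0 then 0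
    else x ⟨(i : ℕ) - 1, by have := i.isLt; omega⟩ ⟨(j : ℕ) - 1, by have := j.isLt; omega⟩

lemma fin_mk_succ {n : ℕ} (i : Fin (n + 2)) (hi : (i : ℕ) ≠ 0) (h : (i : ℕ) - 1 < n + 1) :
    (⟨(i : ℕ) - 1, h⟩ : Fin (n + 1)).succ = i := Fin.ext (by simp; omega)

lemma Psi_zero_zero {n : ℕ} (α β : ℝ) (x : Matrix (Fin (n + 1)) (Fin (n + 1)) ℝ) :
    Psi α β x 0 0 = α + β ^ 2 * x 0 0 := by
  simp [Psi]

lemma Psi_zero_one {n : ℕ} (α β : ℝ) (x : Matrix (Fin (n + 1)) (Fin (n + 1)) ℝ) :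
    Psi α β x 0 1 = β * x 0 0 := by
  simp [Psi]

lemma Psi_one_zero {n : ℕ} (α β : ℝ) (x : Matrix (Fin (n + 1)) (Fin (n + 1)) ℝ) :
    Psi α β x 1 0 = β * x 0 0 := by
  simp [Psi]

lemma Psi_succ_succ {n : ℕ} (α β : ℝ) (x : Matrix (Fin (n + 1)) (Fin (n + 1)) ℝ)
    (i j : Fin (n + 1)) : Psi α β x i.succ j.succ = x i j := by
  simp only [Psi, Matrix.of_apply, Fin.val_succ]
  rw [if_neg (by omega), if_neg (by omega), if_neg (by omega)]
  congr 1

lemma psi_mem {n : ℕ} {α β : ℝ} {x : Matrix (Fin (n + 1)) (Fin (n + 1)) ℝ}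
    (hα : 0 < α) (hx : x ∈ QG (n + 1)) : Psi α β x ∈ QG (n + 2) := by
  obtain ⟨⟨hsym, hzero⟩, hdiag, hdet⟩ := hx
  refine ⟨⟨?_, ?_⟩, ?_, ?_⟩
  · rw [Matrix.IsSymm]
    ext i j
    simp only [Matrix.transpose_apply, Psi, Matrix.of_apply]
    split_ifs <;> first | rfl | omega | exact hsym.apply _ _
  · intro i j hij
    have hi : (i : ℕ) ≠ 0 ∨ (j : ℕ) ≠ 0 := by omega
    simp only [Psi, Matrix.of_apply]
    rw [if_neg (by omega), if_neg (by omega)]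
    split_ifs with h
    · rfl
    · exact hzero _ _ (by simp; omega)
  · intro i
    by_cases h : (i : ℕ) = 0
    · have hi0 : i = 0 := Fin.ext (by simp [h])
      rw [hi0, Psi_zero_zero]
      nlinarith [hdiag 0, sq_nonneg β]
    · rw [← fin_mk_succ i h (by omega), Psi_succ_succ]
      exact hdiag _
  · intro i j hij
    by_cases h : (i : ℕ) = 0
    · have hi0 : i = 0 := Fin.ext (by simp [h])
      have hj1 : j = 1 := Fin.ext (by simp; omega)
      rw [hi0, hj1, Psi_zero_zero, Psi_zero_one, ← Fin.succ_zero_eq_one, Psi_succ_succ]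
      nlinarith [hdiag 0, sq_nonneg β]
    · have hj : (j : ℕ) ≠ 0 := by omega
      have hib : (i : ℕ) - 1 < n + 1 := by have := i.isLt; omega
      have hjb : (j : ℕ) - 1 < n + 1 := by have := j.isLt; omega
      rw [← fin_mk_succ i h hib, ← fin_mk_succ j hj hjb,
        Psi_succ_succ, Psi_succ_succ, Psi_succ_succ]
      exact hdet _ _ (by simp; omega)

/-- `Ψ` is a well-defined bijection from `ℝ₊ × ℝ × Q_{A_{n+1}}` onto `Q_{A_{n+2}}`. -/
theorem stmt4 (n : ℕ) :
    Set.BijOn (fun p : ℝ × ℝ × Matrix (Fin (n + 1)) (Fin (n + 1)) ℝ => Psi p.1 p.2.1 p.2.2)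
      {p | 0 < p.1 ∧ p.2.2 ∈ QG (n + 1)} (QG (n + 2)) := by
  refine ⟨?_, ?_, ?_⟩
  · rintro ⟨α, β, x⟩ ⟨hα, hx⟩
    exact psi_mem hα hx
  · rintro ⟨α, β, x⟩ ⟨hα, hx⟩ ⟨α', β', x'⟩ ⟨hα', hx'⟩ heq
    simp only at heq
    have hxx : x = x' := by
      ext i j
      have := congrFun (congrFun heq i.succ) j.succ
      rwa [Psi_succ_succ, Psi_succ_succ] at this
    have hx'00 : 0 < x' 0 0 := hx'.2.1 0
    have h01 := congrFun (congrFun heq 0) 1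
    rw [Psi_zero_one, Psi_zero_one, hxx] at h01
    have hβ : β = β' := mul_right_cancel₀ (ne_of_gt hx'00) h01
    have h00 := congrFun (congrFun heq 0) 0
    rw [Psi_zero_zero, Psi_zero_zero, hxx, hβ] at h00
    have hα2 : α = α' := by linarith
    simp [Prod.ext_iff, hα2, hβ, hxx]
  · intro η hη
    obtain ⟨⟨hsym, hzero⟩, hdiag, hdet⟩ := hη
    have h11 : (0 : ℝ) < η 1 1 := hdiag 1
    have h11' : η 1 1 ≠ 0 := ne_of_gt h11
    have hdet0 : 0 < η 0 0 * η 1 1 - (η 0 1) ^ 2 := hdet 0 1 (by simp)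
    set x : Matrix (Fin (n + 1)) (Fin (n + 1)) ℝ :=
      Matrix.of fun i j => η i.succ j.succ with hxdef
    have hx00 : x 0 0 = η 1 1 := by
      simp only [hxdef, Matrix.of_apply, Fin.succ_zero_eq_one]
    refine ⟨(η 0 0 - (η 0 1) ^ 2 / η 1 1, η 0 1 / η 1 1, x), ⟨?_, ?_, ?_, ?_⟩, ?_⟩
    · show (0 : ℝ) < η 0 0 - (η 0 1) ^ 2 / η 1 1
      have : η 0 0 - (η 0 1) ^ 2 / η 1 1 = (η 0 0 * η 1 1 - (η 0 1) ^ 2) / η 1 1 := by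
        field_simp
      rw [this]
      exact div_pos hdet0 h11
    · constructor
      · rw [Matrix.IsSymm]
        ext i j
        simp only [hxdef, Matrix.transpose_apply, Matrix.of_apply]
        exact hsym.apply _ _
      · intro i j hij
        simp only [hxdef, Matrix.of_apply]
        exact hzero _ _ (by simp [Fin.val_succ]; omega)
    · intro i
      exact hdiag i.succ
    · intro i j hij
      exact hdet i.succ j.succ (by simp [Fin.val_succ]; omega)
    · show Psi _ _ x = η
      ext i j
      by_cases hi : (i : ℕ) = 0
      · have hi0 : i = 0 := Fin.ext (by simp [hi])
        subst hi0
        by_cases hj : (j : ℕ) = 0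
        · have hj0 : j = 0 := Fin.ext (by simp [hj])
          subst hj0
          rw [Psi_zero_zero, hx00]
          field_simp
          ring
        · by_cases hj1 : (j : ℕ) = 1
          · have hj1' : j = 1 := Fin.ext (by simp [hj1])
            subst hj1'
            rw [Psi_zero_one, hx00]
            field_simp
          · simp only [Psi, Matrix.of_apply]
            rw [if_neg (by simp; omega), if_neg (by simp; omega), if_pos (by simp)]
            exact (hzero 0 j (by simp; omega)).symm
      · by_cases hj : (j : ℕ) = 0
        · have hj0 : j = 0 := Fin.ext (by simp [hj])
          subst hj0
          by_cases hi1 : (i : ℕ) = 1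
          · have hi1' : i = 1 := Fin.ext (by simp [hi1])
            subst hi1'
            rw [Psi_one_zero, hx00]
            rw [hsym.apply 0 1] at *
            field_simp
          · simp only [Psi, Matrix.of_apply]
            rw [if_neg (by simp; omega), if_neg (by simp; omega), if_pos (by simp)]
            exact (hzero i 0 (by simp; omega)).symm
        · have hib : (i : ℕ) - 1 < n + 1 := by have := i.isLt; omega
          have hjb : (j : ℕ) - 1 < n + 1 := by have := j.isLt; omega
          rw [← fin_mk_succ i hi hib, ← fin_mk_succ j hj hjb, Psi_succ_succ]
          simp only [hxdef, Matrix.of_apply]
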